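/- arXiv:2010.10168 — 4 statements merged into one kernel-verified Lean document; each statement's English description precedes it below -/
import Mathlib

section
/- For any x*, x ∈ ℝⁿ, the Bregman divergence of the hypentropy potential satisfies ‖x − x*‖₂² ≤ 2 √(max(‖x‖_∞², ‖x*‖_∞²) + β²) · D_Φ(x*, x). -/
/-!
Put `M = max (‖x‖∞², ‖x*‖∞²)`. On `|t| ≤ √M` the one-dimensional hypentropy
`φ t = t arsinh (t/β) - √(t² + β²)` has `φ'' t = 1/√(t² + β²) ≥ 1/√(M + β²)`, so `φ` is
`1/√(M + β²)`-strongly convex there and its Bregman divergence `D_φ(a, b)` is at least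
`(a - b)² / (2√(M + β²))`. Since `Φ` is separable, `D_Φ` is the sum of these coordinate divergences.
-/

open Finset Real

theorem ConvexOn.add_mul_sub_le_of_hasDerivAt {s : Set ℝ} {f : ℝ → ℝ} {f' x y : ℝ}
    (hf : ConvexOn ℝ s f) (hx : x ∈ s) (hy : y ∈ s) (hfx : HasDerivAt f f' x) :
    f x + f' * (y - x) ≤ f y := by
  rcases lt_trichotomy x y with hxy | rfl | hxy
  · have := hf.le_slope_of_hasDerivAt hx hy hxy hfx
    rw [slope_def_field, le_div_iff₀ (sub_pos.2 hxy)] at this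
    linarith
  · simp
  · have := hf.slope_le_of_hasDerivAt hy hx hxy hfx
    rw [slope_def_field, div_le_iff₀ (sub_pos.2 hxy)] at this
    linarith

theorem mul_sq_sub_le_bregman_of_le_deriv2 {s : Set ℝ} (hs : Convex ℝ s)
    {f f' f'' : ℝ → ℝ} {m a b : ℝ} (hf : ∀ x ∈ s, HasDerivAt f (f' x) x)
    (hf' : ∀ x ∈ interior s, HasDerivAt f' (f'' x) x) (hm : ∀ x ∈ interior s, m ≤ f'' x)
    (ha : a ∈ s) (hb : b ∈ s) :
    m / 2 * (a - b) ^ 2 ≤ f a - f b - f' b * (a - b) := by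
  have hg : ∀ x ∈ s, HasDerivAt (fun x => f x - m / 2 * x ^ 2) (f' x - m * x) x :=
    fun x hx => ((hf x hx).sub ((hasDerivAt_pow 2 x).const_mul (m / 2))).congr_deriv (by ring)
  have hg' : ∀ x ∈ interior s, HasDerivAt (fun x => f' x - m * x) (f'' x - m) x :=
    fun x hx => ((hf' x hx).sub ((hasDerivAt_id' x).const_mul m)).congr_deriv (by ring)
  have hconvex : ConvexOn ℝ s fun x => f x - m / 2 * x ^ 2 :=
    convexOn_of_hasDerivWithinAt2_nonneg hs
      (fun x hx => (hg x hx).continuousAt.continuousWithinAt)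
      (fun x hx => (hg x (interior_subset hx)).hasDerivWithinAt)
      (fun x hx => (hg' x hx).hasDerivWithinAt) (fun x hx => sub_nonneg.2 (hm x hx))
  linear_combination hconvex.add_mul_sub_le_of_hasDerivAt hb ha (hg b hb)

noncomputable def hypentropy (β t : ℝ) : ℝ := t * arsinh (t / β) - √(t ^ 2 + β ^ 2)

theorem hasDerivAt_arsinh_div_const {β : ℝ} (hβ : 0 < β) (t : ℝ) :
    HasDerivAt (fun s => arsinh (s / β)) (√(t ^ 2 + β ^ 2))⁻¹ t := by
  refine ((hasDerivAt_id' t).div_const β).arsinh.congr_deriv ?_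
  have hsqrt : √(t ^ 2 + β ^ 2) = β * √(1 + (t / β) ^ 2) := by
    rw [← sqrt_sq hβ.le, ← sqrt_mul (sq_nonneg β), sqrt_sq hβ.le]
    congr 1
    field_simp
    ring
  rw [hsqrt, smul_eq_mul, mul_inv, one_div, mul_comm]

theorem hasDerivAt_hypentropy {β : ℝ} (hβ : 0 < β) (t : ℝ) :
    HasDerivAt (hypentropy β) (arsinh (t / β)) t := by
  have hsq : HasDerivAt (fun s => s ^ 2 + β ^ 2) (2 * t) t := by
    simpa using (hasDerivAt_pow 2 t).add_const (β ^ 2)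
  refine (((hasDerivAt_id' t).mul (hasDerivAt_arsinh_div_const hβ t)).sub
    (hsq.sqrt (by positivity))).congr_deriv ?_
  have : 0 < √(t ^ 2 + β ^ 2) := sqrt_pos.2 (by positivity)
  field_simp
  ring

theorem sq_sub_le_hypentropy_bregman {β M a b : ℝ} (hβ : 0 < β) (ha : a ^ 2 ≤ M)
    (hb : b ^ 2 ≤ M) :
    (a - b) ^ 2 ≤
      2 * √(M + β ^ 2) * (hypentropy β a - hypentropy β b - arsinh (b / β) * (a - b)) := by
  set K := √(M + β ^ 2)
  have hM : 0 ≤ M := (sq_nonneg b).trans hb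
  have hK : 0 < K := sqrt_pos.2 (by positivity)
  have mem_box : ∀ t, t ^ 2 ≤ M → t ∈ Set.Icc (-√M) √M :=
    fun t ht => abs_le.1 (abs_le_sqrt ht)
  have curvature : ∀ t ∈ interior (Set.Icc (-√M) √M), K⁻¹ ≤ (√(t ^ 2 + β ^ 2))⁻¹ := by
    intro t ht
    rw [interior_Icc] at ht
    obtain ⟨hlo, hhi⟩ := ht
    have ht_sq : t ^ 2 ≤ M := by simpa [sq_sqrt hM] using sq_le_sq' hlo.le hhi.le
    exact inv_anti₀ (sqrt_pos.2 (by positivity)) (sqrt_le_sqrt (by linarith))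
  have hbregman := mul_sq_sub_le_bregman_of_le_deriv2 (convex_Icc _ _)
    (fun t _ => hasDerivAt_hypentropy hβ t) (fun t _ => hasDerivAt_arsinh_div_const hβ t)
    curvature (mem_box a ha) (mem_box b hb)
  calc (a - b) ^ 2 = 2 * K * (K⁻¹ / 2 * (a - b) ^ 2) := by field_simp
    _ ≤ _ := by gcongr

theorem fderiv_sum_comp_apply {ι : Type*} [Fintype ι] {f : ℝ → ℝ} {f' x : ι → ℝ}
    (hf : ∀ i, HasDerivAt f (f' i) (x i)) (v : ι → ℝ) :
    fderiv ℝ (fun y : ι → ℝ => ∑ i, f (y i)) x v = ∑ i, f' i * v i := by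
  have : HasFDerivAt (fun y : ι → ℝ => ∑ i, f (y i))
      (∑ i, f' i • ContinuousLinearMap.proj (R := ℝ) (φ := fun _ : ι => ℝ) i) x :=
    HasFDerivAt.fun_sum fun i _ => (hf i).comp_hasFDerivAt x (hasFDerivAt_apply i x)
  simp [this.fderiv]

/-- Lower bound: the squared ℓ₂ distance is controlled by the Bregman divergence
of the hypentropy mirror map. -/
theorem hypentropy_bregman_lower_bound (n : ℕ) (β : ℝ) (hβ : 0 < β)
    (Φ : (Fin n → ℝ) → ℝ)
    (hΦ : ∀ y : Fin n → ℝ,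
      Φ y = ∑ i, (y i * Real.arsinh (y i / β) - Real.sqrt ((y i) ^ 2 + β ^ 2)))
    (xs x : Fin n → ℝ) :
    ∑ i, (x i - xs i) ^ 2 ≤
      2 * Real.sqrt (max (⨆ i, (x i) ^ 2) (⨆ i, (xs i) ^ 2) + β ^ 2) *
        (Φ xs - Φ x - fderiv ℝ Φ x (fun i => xs i - x i)) := by
  obtain rfl : Φ = fun y => ∑ i, hypentropy β (y i) := funext hΦ
  rw [fderiv_sum_comp_apply (fun i => hasDerivAt_hypentropy hβ (x i)), ← sum_sub_distrib,
    ← sum_sub_distrib, mul_sum]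
  refine sum_le_sum fun i _ => ?_
  rw [sub_sq_comm]
  exact sq_sub_le_hypentropy_bregman hβ
    (le_max_of_le_right (le_ciSup (Finite.bddAbove_range fun j => xs j ^ 2) i))
    (le_max_of_le_left (le_ciSup (Finite.bddAbove_range fun j => x j ^ 2) i))
end

section
/- For A ∼ N(0, I_n) standard Gaussian in ℝⁿ and any x, x* ∈ ℝⁿ, the expectation of the phase-retrieval gradient satisfies E[((A^T x)² − (A^T x*)²)(A^T x) A] = (3‖x‖₂² − ‖x*‖₂²) x − 2 (x^T x*) x*. -/
open Finset MeasureTheory ProbabilityTheory Real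
open scoped NNReal RealInnerProductSpace

/-! For a standard Gaussian vector `A`, each linear form `⟪w, A⟫` is `N(0, ‖w‖²)`, so
`E ⟪w, A⟫⁴ = 3 ‖w‖⁴`; the fourth moment `3` comes from the integration-by-parts recursion
`E t^(k+2) = (k+1) E t^k`. Tested against a vector `e`, the gradient is a combination of the mixed
moments `E ⟪u, A⟫³ ⟪v, A⟫` and `E ⟪s, A⟫² ⟪x, A⟫ ⟪e, A⟫`, and polarization writes these integrands
as linear combinations of fourth powers `⟪w, A⟫⁴`. Coordinate `j` is the test vector `e = e_j`. -/

lemma gaussianPDFReal_zero_one (t : ℝ) :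
    gaussianPDFReal 0 1 t = (√(2 * π))⁻¹ * rexp (-t ^ 2 / 2) := by
  simp [gaussianPDFReal]

lemma hasDerivAt_gaussianPDFReal_zero_one (t : ℝ) :
    HasDerivAt (gaussianPDFReal 0 1) (-t * gaussianPDFReal 0 1 t) t := by
  rw [show gaussianPDFReal 0 1 = _ from funext gaussianPDFReal_zero_one]
  refine ((((hasDerivAt_pow 2 t).fun_neg.div_const 2).exp).const_mul _).congr_deriv ?_
  push_cast
  ring

lemma integrable_gaussianPDFReal_zero_one_mul_pow (k : ℕ) :
    Integrable fun t : ℝ => gaussianPDFReal 0 1 t * t ^ k := by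
  have h := (integrable_rpow_mul_exp_neg_mul_sq (b := 1 / 2) (by norm_num) (s := k)
    (neg_one_lt_zero.trans_le k.cast_nonneg)).const_mul (√(2 * π))⁻¹
  refine h.congr (ae_of_all _ fun t => ?_)
  simp only [gaussianPDFReal_zero_one, rpow_natCast]
  ring_nf

lemma integral_pow_add_two_gaussianReal_zero_one (k : ℕ) :
    ∫ t, t ^ (k + 2) ∂gaussianReal 0 1 = (k + 1) * ∫ t, t ^ k ∂gaussianReal 0 1 := by
  simp only [integral_gaussianReal_eq_integral_smul one_ne_zero, smul_eq_mul]
  have hint := integrable_gaussianPDFReal_zero_one_mul_pow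
  have hderiv (t : ℝ) : HasDerivAt (fun t => t ^ (k + 1) * gaussianPDFReal 0 1 t)
      ((k + 1) * (gaussianPDFReal 0 1 t * t ^ k) - gaussianPDFReal 0 1 t * t ^ (k + 2)) t := by
    refine ((hasDerivAt_pow (k + 1) t).fun_mul
      (hasDerivAt_gaussianPDFReal_zero_one t)).congr_deriv ?_
    push_cast
    ring
  have h := integral_eq_zero_of_hasDerivAt_of_integrable hderiv
    (((hint k).const_mul _).sub (hint (k + 2))) (by simpa only [mul_comm] using hint (k + 1))
  rw [integral_sub ((hint k).const_mul _) (hint (k + 2)), integral_const_mul, sub_eq_zero] at h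
  exact h.symm

lemma integral_pow_four_gaussianReal_zero_one : ∫ t, t ^ 4 ∂gaussianReal 0 1 = 3 := by
  rw [integral_pow_add_two_gaussianReal_zero_one 2, integral_pow_add_two_gaussianReal_zero_one 0]
  norm_num

lemma integral_pow_four_gaussianReal (v : ℝ≥0) : ∫ t, t ^ 4 ∂gaussianReal 0 v = 3 * v ^ 2 := by
  have hv : gaussianReal 0 v = (gaussianReal 0 1).map (√v * ·) := by
    rw [gaussianReal_map_const_mul, mul_zero, mul_one]
    congr
    ext
    simp
  rw [hv, integral_map (by fun_prop) (by fun_prop)]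
  simp_rw [mul_pow]
  rw [integral_const_mul, integral_pow_four_gaussianReal_zero_one,
    show √(v : ℝ) ^ 4 = (√(v : ℝ) ^ 2) ^ 2 by ring, sq_sqrt v.coe_nonneg]
  ring

section stdGaussian

variable {E : Type*} [NormedAddCommGroup E] [InnerProductSpace ℝ E]

lemma inner_pow_three_mul_inner_eq (u v y : E) :
    ⟪u, y⟫ ^ 3 * ⟪v, y⟫ = (8 * (⟪u + v, y⟫ ^ 4 - ⟪u - v, y⟫ ^ 4)
      - (⟪u + (2 : ℝ) • v, y⟫ ^ 4 - ⟪u - (2 : ℝ) • v, y⟫ ^ 4)) / 48 := by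
  simp only [inner_add_left, inner_sub_left, real_inner_smul_left]
  ring

lemma inner_sq_mul_inner_mul_inner_eq (s x e y : E) :
    ⟪s, y⟫ ^ 2 * ⟪x, y⟫ * ⟪e, y⟫ = (⟪s + x, y⟫ ^ 3 * ⟪e, y⟫ - ⟪s - x, y⟫ ^ 3 * ⟪e, y⟫
      - 2 * (⟪x, y⟫ ^ 3 * ⟪e, y⟫)) / 6 := by
  simp only [inner_add_left, inner_sub_left]
  ring

variable [FiniteDimensional ℝ E] [MeasurableSpace E] [BorelSpace E]

lemma stdGaussian_map_inner (u : E) :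
    (stdGaussian E).map (fun y => ⟪u, y⟫) = gaussianReal 0 (‖u‖₊ ^ 2) := by
  have h := IsGaussian.map_eq_gaussianReal (μ := stdGaussian E) (innerSL ℝ u)
  rw [integral_strongDual_stdGaussian, variance_dual_stdGaussian, innerSL_apply_norm] at h
  convert h using 2
  · exact funext fun y => (innerSL_apply_apply ℝ u y).symm
  · ext
    simp

lemma integrable_inner_pow_four_stdGaussian (u : E) :
    Integrable (fun y => ⟪u, y⟫ ^ 4) (stdGaussian E) := by
  have h := (IsGaussian.memLp_dual (stdGaussian E) (innerSL ℝ u) 4 (by simp)).integrable_norm_pow'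
  simpa [Even.pow_abs (by decide : Even 4)] using h

lemma integral_inner_pow_four_stdGaussian (u : E) :
    ∫ y, ⟪u, y⟫ ^ 4 ∂stdGaussian E = 3 * ‖u‖ ^ 4 := by
  rw [← integral_map (f := fun t : ℝ => t ^ 4) (by fun_prop) (by fun_prop),
    stdGaussian_map_inner, integral_pow_four_gaussianReal]
  push_cast
  ring

lemma integrable_inner_pow_three_mul_inner_stdGaussian (u v : E) :
    Integrable (fun y => ⟪u, y⟫ ^ 3 * ⟪v, y⟫) (stdGaussian E) := by
  have hQ := integrable_inner_pow_four_stdGaussian (E := E)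
  simp_rw [inner_pow_three_mul_inner_eq u v]
  fun_prop

lemma integral_inner_pow_three_mul_inner_stdGaussian (u v : E) :
    ∫ y, ⟪u, y⟫ ^ 3 * ⟪v, y⟫ ∂stdGaussian E = 3 * ‖u‖ ^ 2 * ⟪u, v⟫ := by
  have hQ := integrable_inner_pow_four_stdGaussian (E := E)
  simp_rw [inner_pow_three_mul_inner_eq u v]
  rw [integral_div, integral_sub (by fun_prop) (by fun_prop), integral_const_mul,
    integral_sub (hQ _) (hQ _), integral_sub (hQ _) (hQ _)]
  simp only [integral_inner_pow_four_stdGaussian, show ∀ w : E, ‖w‖ ^ 4 = (‖w‖ ^ 2) ^ 2 from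
    fun w => by ring, norm_add_sq_real, norm_sub_sq_real, inner_smul_right, norm_smul, norm_ofNat]
  ring

lemma integrable_inner_sq_mul_inner_mul_inner_stdGaussian (s x e : E) :
    Integrable (fun y => ⟪s, y⟫ ^ 2 * ⟪x, y⟫ * ⟪e, y⟫) (stdGaussian E) := by
  have hT := integrable_inner_pow_three_mul_inner_stdGaussian (E := E)
  simp_rw [inner_sq_mul_inner_mul_inner_eq s x e]
  fun_prop

lemma integral_inner_sq_mul_inner_mul_inner_stdGaussian (s x e : E) :
    ∫ y, ⟪s, y⟫ ^ 2 * ⟪x, y⟫ * ⟪e, y⟫ ∂stdGaussian E = ‖s‖ ^ 2 * ⟪x, e⟫ + 2 * ⟪s, x⟫ * ⟪s, e⟫ := by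
  have hT := integrable_inner_pow_three_mul_inner_stdGaussian (E := E)
  simp_rw [inner_sq_mul_inner_mul_inner_eq s x e]
  rw [integral_div, integral_sub (by fun_prop) (by fun_prop), integral_sub (hT _ _) (hT _ _),
    integral_const_mul]
  simp only [integral_inner_pow_three_mul_inner_stdGaussian]
  simp only [norm_add_sq_real, norm_sub_sq_real, inner_add_left, inner_sub_left]
  ring

theorem integral_phaseRetrieval_gradient_inner_stdGaussian (x s e : E) :
    ∫ y, (⟪x, y⟫ ^ 2 - ⟪s, y⟫ ^ 2) * ⟪x, y⟫ * ⟪e, y⟫ ∂stdGaussian E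
      = (3 * ‖x‖ ^ 2 - ‖s‖ ^ 2) * ⟪x, e⟫ - 2 * ⟪x, s⟫ * ⟪s, e⟫ := by
  have hsplit (y : E) : (⟪x, y⟫ ^ 2 - ⟪s, y⟫ ^ 2) * ⟪x, y⟫ * ⟪e, y⟫
      = ⟪x, y⟫ ^ 3 * ⟪e, y⟫ - ⟪s, y⟫ ^ 2 * ⟪x, y⟫ * ⟪e, y⟫ := by ring
  simp_rw [hsplit]
  rw [integral_sub (integrable_inner_pow_three_mul_inner_stdGaussian x e)
    (integrable_inner_sq_mul_inner_mul_inner_stdGaussian s x e),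
    integral_inner_pow_three_mul_inner_stdGaussian,
    integral_inner_sq_mul_inner_mul_inner_stdGaussian, real_inner_comm s x]
  ring

end stdGaussian

/-- The population gradient of the phase retrieval empirical risk under a
standard Gaussian measurement vector. -/
theorem phase_retrieval_population_gradient (n : ℕ) (x xs : Fin n → ℝ) (j : Fin n) :
    ∫ a : Fin n → ℝ,
        (((∑ i, a i * x i) ^ 2 - (∑ i, a i * xs i) ^ 2) * (∑ i, a i * x i) * a j)
        ∂(Measure.pi fun _ : Fin n => gaussianReal 0 1) =
      (3 * ∑ i, (x i) ^ 2 - ∑ i, (xs i) ^ 2) * x j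
        - 2 * (∑ i, x i * xs i) * xs j := by
  have h := integral_phaseRetrieval_gradient_inner_stdGaussian (WithLp.toLp 2 x)
    (WithLp.toLp 2 xs) (EuclideanSpace.single j 1)
  rw [← map_pi_eq_stdGaussian, ← MeasurableEquiv.coe_toLp, integral_map_equiv] at h
  simpa [PiLp.inner_apply, EuclideanSpace.real_norm_sq_eq, mul_comm] using h
end

section
/- For a fixed x* ∈ ℝⁿ with ‖x*‖₂ = 1, let the population risk gradient be ∇f(x) = (3‖x‖₂² − ‖x*‖₂²) x − 2 (x^T x*) x*. Then ∇f(x) = 0 if and only if x = 0, or (‖x‖₂² = 1/3 and x^T x* = 0), or x = x*, or x = −x*. -/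
open Finset

/-- Characterization of the stationary points of the population risk gradient. -/
theorem population_gradient_zeros (n : ℕ) (xs : Fin n → ℝ)
    (hxs : ∑ i, (xs i) ^ 2 = 1) (x : Fin n → ℝ) :
    (fun i => (3 * ∑ l, (x l) ^ 2 - 1) * x i - 2 * (∑ l, x l * xs l) * xs i) = 0 ↔
      x = 0 ∨ ((∑ i, (x i) ^ 2 = 1 / 3) ∧ (∑ i, x i * xs i = 0)) ∨ x = xs ∨ x = -xs := by
  set s := ∑ l, (x l) ^ 2 with hs
  set t := ∑ l, x l * xs l with ht
  have hgen : ∀ (c : ℝ) (f : Fin n → ℝ), ∑ i, c * f i = c * ∑ i, f i :=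
    fun c f => by rw [Finset.mul_sum]
  constructor
  · intro h
    have h' : ∀ i, (3 * s - 1) * x i - 2 * t * xs i = 0 := fun i => congrFun h i
    have key : ∀ i, (3 * s - 1) * x i = 2 * t * xs i := fun i => by linarith [h' i]
    have e1 : (3 * s - 1) * s = 2 * t * t := by
      have h1 : ∑ i, ((3 * s - 1) * x i) * x i = ∑ i, (2 * t * xs i) * x i :=
        Finset.sum_congr rfl fun i _ => by rw [key i]
      have h2 : ∑ i, ((3 * s - 1) * x i) * x i = (3 * s - 1) * s :=
        calc ∑ i, ((3 * s - 1) * x i) * x i = ∑ i, (3 * s - 1) * (x i) ^ 2 :=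
              Finset.sum_congr rfl fun i _ => by ring
          _ = (3 * s - 1) * ∑ i, (x i) ^ 2 := hgen _ _
          _ = (3 * s - 1) * s := rfl
      have h3 : ∑ i, (2 * t * xs i) * x i = 2 * t * t :=
        calc ∑ i, (2 * t * xs i) * x i = ∑ i, (2 * t) * (x i * xs i) :=
              Finset.sum_congr rfl fun i _ => by ring
          _ = (2 * t) * ∑ i, (x i * xs i) := hgen _ _
          _ = 2 * t * t := rfl
      rw [← h2, h1, h3]
    have e2 : (3 * s - 1) * t = 2 * t := by
      have h1 : ∑ i, ((3 * s - 1) * x i) * xs i = ∑ i, (2 * t * xs i) * xs i :=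
        Finset.sum_congr rfl fun i _ => by rw [key i]
      have h2 : ∑ i, ((3 * s - 1) * x i) * xs i = (3 * s - 1) * t :=
        calc ∑ i, ((3 * s - 1) * x i) * xs i = ∑ i, (3 * s - 1) * (x i * xs i) :=
              Finset.sum_congr rfl fun i _ => by ring
          _ = (3 * s - 1) * ∑ i, (x i * xs i) := hgen _ _
          _ = (3 * s - 1) * t := rfl
      have h3 : ∑ i, (2 * t * xs i) * xs i = 2 * t := by
        calc ∑ i, (2 * t * xs i) * xs i = ∑ i, (2 * t) * (xs i) ^ 2 :=
              Finset.sum_congr rfl fun i _ => by ring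
          _ = (2 * t) * ∑ i, (xs i) ^ 2 := hgen _ _
          _ = 2 * t := by rw [hxs, mul_one]
      rw [← h2, h1, h3]
    have ht0 : t = 0 ∨ s = 1 := by
      rcases mul_eq_zero.1 (show t * (3 * s - 3) = 0 by nlinarith [e2]) with h | h
      · exact Or.inl h
      · right; linarith
    rcases ht0 with ht0 | hs1
    · have : (3 * s - 1) * s = 0 := by rw [e1, ht0]; ring
      rcases mul_eq_zero.1 this with h0 | h0
      · right; left
        exact ⟨by linarith, ht0⟩
      · left
        funext i
        have hnn : ∀ i ∈ Finset.univ (α := Fin n), (0:ℝ) ≤ (x i) ^ 2 :=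
          fun i _ => sq_nonneg _
        have hzi := (Finset.sum_eq_zero_iff_of_nonneg hnn).1 h0 i (Finset.mem_univ i)
        have := pow_eq_zero_iff (n := 2) (by norm_num) |>.1 hzi
        simpa using this
    · have ht2 : t * t = 1 := by nlinarith [e1, hs1]
      rcases mul_self_eq_one_iff.1 ht2 with h1 | h1
      · right; right; left
        funext i
        have := key i
        rw [hs1, h1] at this
        linarith
      · right; right; right
        funext i
        have := key i
        rw [hs1, h1] at this
        simp only [Pi.neg_apply]
        linarith
  · rintro (rfl | ⟨h1, h2⟩ | rfl | rfl)
    · funext i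
      have hsv : s = 0 := by rw [hs]; simp
      have htv : t = 0 := by rw [ht]; simp
      show (3 * s - 1) * (0 : Fin n → ℝ) i - 2 * t * xs i = (0 : Fin n → ℝ) i
      rw [hsv, htv]; simp
    · funext i
      have hsv : s = 1 / 3 := by rw [hs]; exact h1
      have htv : t = 0 := by rw [ht]; exact h2
      show (3 * s - 1) * x i - 2 * t * xs i = (0 : Fin n → ℝ) i
      rw [hsv, htv]
      show (3 * (1/3) - 1) * x i - 2 * 0 * xs i = 0
      ring
    · funext i
      have hsv : s = 1 := hxs
      have htv : t = 1 := by
        rw [ht, ← hxs]; exact Finset.sum_congr rfl fun i _ => by ring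
      show (3 * s - 1) * x i - 2 * t * x i = (0 : Fin n → ℝ) i
      rw [hsv, htv]
      show (3 * 1 - 1) * x i - 2 * 1 * x i = 0
      ring
    · funext i
      have hsv : s = 1 := by
        rw [hs, ← hxs]
        exact Finset.sum_congr rfl fun i _ => by simp [neg_pow]
      have htv : t = -1 := by
        have h5 : ∑ l, (-xs) l * xs l = -∑ l, (xs l) ^ 2 := by
          rw [← Finset.sum_neg_distrib]
          exact Finset.sum_congr rfl fun i _ => by simp; ring
        rw [ht, h5, hxs]
      show (3 * s - 1) * (-xs) i - 2 * t * xs i = (0 : Fin n → ℝ) i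
      rw [hsv, htv]
      show (3 * 1 - 1) * (-(xs i)) - 2 * (-1) * xs i = 0
      ring
end

section
/- Let x* ∈ ℝⁿ with ‖x*‖₂ = 1 and X ∈ ℝⁿ with r = ‖X‖₂ satisfying 2/5 < r² ≤ 2 and 4r² − 2 − ‖X − x*‖₂² > 0. Then ⟨∇f(X), x* − X⟩ ≤ (−3r⁴ + 4r³ + r² − 2r) − ‖X − x*‖₂² · r ≤ −√(2/5) · ‖X − x*‖₂², where ∇f(X) = (3‖X‖₂² − 1)X − 2(X^T x*)x*. -/
open Finset

/-- Case 2 bound on the population inner product when `2/5 < ‖X‖₂² ≤ 2`. -/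
theorem population_inner_product_case2 (n : ℕ) (xs X : Fin n → ℝ)
    (hxs : ∑ i, (xs i) ^ 2 = 1)
    (r : ℝ) (hr : r = Real.sqrt (∑ i, (X i) ^ 2))
    (h1 : 2 / 5 < r ^ 2) (h2 : r ^ 2 ≤ 2)
    (h3 : 0 < 4 * r ^ 2 - 2 - ∑ i, (X i - xs i) ^ 2) :
    (∑ i, ((3 * (∑ l, (X l) ^ 2) - 1) * X i - 2 * (∑ l, X l * xs l) * xs i)
        * (xs i - X i)) ≤
      (-3 * r ^ 4 + 4 * r ^ 3 + r ^ 2 - 2 * r) - (∑ i, (X i - xs i) ^ 2) * r ∧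
    (-3 * r ^ 4 + 4 * r ^ 3 + r ^ 2 - 2 * r) - (∑ i, (X i - xs i) ^ 2) * r ≤
      -Real.sqrt (2 / 5) * ∑ i, (X i - xs i) ^ 2 := by
  set s : ℝ := ∑ i, (X i) ^ 2 with hs
  set t : ℝ := ∑ i, X i * xs i with ht
  set d : ℝ := ∑ i, (X i - xs i) ^ 2 with hd
  have hs0 : 0 ≤ s := Finset.sum_nonneg fun i _ => sq_nonneg _
  have hr0 : 0 ≤ r := hr ▸ Real.sqrt_nonneg _
  have hrs : r ^ 2 = s := by rw [hr, Real.sq_sqrt hs0]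
  have hrpos : 0 < r := by nlinarith
  have hd0 : 0 ≤ d := Finset.sum_nonneg fun i _ => sq_nonneg _
  -- d = s + 1 - 2t
  have e2 : (∑ i, (X i - xs i) ^ 2)
      = (∑ i, (X i) ^ 2) + (∑ i, (xs i) ^ 2) - 2 * (∑ i, X i * xs i) := by
    rw [Finset.mul_sum, ← Finset.sum_add_distrib, ← Finset.sum_sub_distrib]
    exact Finset.sum_congr rfl fun i _ => by ring
  rw [hxs, ← hs, ← ht, ← hd] at e2
  have hdeq : d = s + 1 - 2 * t := e2
  -- Cauchy-Schwarz: t ≤ r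
  have hcs : t ^ 2 ≤ s * 1 := by
    have := Finset.sum_mul_sq_le_sq_mul_sq Finset.univ X xs
    rw [hxs, ← hs, ← ht] at this
    exact this
  have htr : t ≤ r := by nlinarith
  have hdlow : (r - 1) ^ 2 ≤ d := by rw [hdeq]; nlinarith
  have hdhigh : d < 4 * r ^ 2 - 2 := by linarith
  -- expand the sum
  have e1 : ∀ a b : ℝ, (∑ i, (a * X i - b * xs i) * (xs i - X i))
      = a * t - a * s - b * 1 + b * t := by
    intro a b
    have key : ∀ i, (a * X i - b * xs i) * (xs i - X i)
        = a * (X i * xs i) - a * (X i) ^ 2 - b * (xs i) ^ 2 + b * (X i * xs i) :=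
      fun i => by ring
    simp_rw [key, Finset.sum_add_distrib, Finset.sum_sub_distrib, ← Finset.mul_sum]
    rw [hxs, ← hs, ← ht]
  constructor
  · rw [e1 (3 * s - 1) (2 * t)]
    have hprod : (d - (r - 1) ^ 2) * (d - (4 * r ^ 2 - 2)) ≤ 0 :=
      mul_nonpos_of_nonneg_of_nonpos (by linarith) (by linarith)
    have ht' : t = (r ^ 2 + 1 - d) / 2 := by rw [hrs]; linarith
    rw [ht', ← hrs]
    nlinarith [hprod]
  · set q : ℝ := Real.sqrt (2 / 5) with hq
    have hq0 : 0 ≤ q := Real.sqrt_nonneg _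
    have hq2 : q ^ 2 = 2 / 5 := Real.sq_sqrt (by norm_num)
    have hqr : q ≤ r := by nlinarith
    nlinarith [mul_nonneg hd0 (sub_nonneg.mpr hqr),
      mul_nonneg (mul_nonneg hrpos.le (sq_nonneg (r - 1))) (by linarith : (0:ℝ) ≤ 3 * r + 2)]
end
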